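/- There exist constants C > 0 and ε₀ > 0 such that for every ε ∈ (0, ε₀) the following holds. Let μ ∈ (0,1) satisfy μ·e^{−μ} = (1+ε)·e^{−(1+ε)} and set ℓ = (C/ε)·ln(1/ε). Then ∑_{t ≥ 1} ( t^{t−1}·(μe^{−μ})^t / (μ·t!) ) · t · p_{t, ℓ/3} ≤ 14ε³. -/

import Mathlib

/-- `HasLongPath G ℓ` : `G` contains a path of length at least `ℓ`. -/
def HasLongPath {V : Type*} (G : SimpleGraph V) (ℓ : ℝ) : Prop :=
  ∃ (a b : V) (P : G.Walk a b), P.IsPath ∧ ℓ ≤ (P.length : ℝ)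

/-- `pTree t ℓ` : the proportion, among the `t^(t-2)` labeled trees on `{1,…,t}`, of those
containing a path of length at least `ℓ`. -/
noncomputable def pTree (t : ℕ) (ℓ : ℝ) : ℝ :=
  (Set.ncard {T : SimpleGraph (Fin t) | T.IsTree ∧ HasLongPath T ℓ} : ℝ) / (t : ℝ) ^ (t - 2)

/-!
A tree containing a path `v₀ ⋯ v_m` is determined by that path and by the parents, towards
the root `v₀`, of the other vertices. Hence at most `t(t-1)⋯(t-m) · t^(t-m-1) ≤ t^t e^(-m²/2t)`
labelled trees on `t` vertices contain a path of length `m`, that is `p_{t,m} ≤ t² e^(-m²/2t)`.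
Since `t^t / t! ≤ e^t`, `μ ≥ e^(-2)` and `e · μe^(-μ) = (1+ε)e^(-ε) ≤ e^(-ε²/4)`, the `t`-th
summand is at most `8 t² e^(-ε²t/4 - m²/2t)`. Splitting `ε²t/4 = ε²t/16 + ε²t/16 + ε²t/8`,
AM–GM gives `ε²t/8 + m²/2t ≥ εm/2` and `t² e^(-ε²t/16) ≤ 512/ε⁴`, which leaves a geometric
series of ratio `e^(-ε²/16)`. So the sum is `O(ε⁻⁶ e^(-εm/2))`, and `εm/2 ≥ 20 log(1/ε)`
for `C = 120`.
-/

namespace SimpleGraph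

variable {V : Type*}

namespace IsTree

variable {G : SimpleGraph V} (hG : G.IsTree)

noncomputable def path (r v : V) : G.Walk r v :=
  (hG.existsUnique_path r v).exists.choose

theorem isPath_path (r v : V) : (hG.path r v).IsPath :=
  (hG.existsUnique_path r v).exists.choose_spec

theorem eq_path {r v : V} {p : G.Walk r v} (hp : p.IsPath) : p = hG.path r v :=
  (hG.existsUnique_path r v).unique hp (hG.isPath_path r v)

noncomputable def parent (r v : V) : V :=
  (hG.path r v).penultimate

theorem parent_eq_penultimate {r v : V} {p : G.Walk r v} (hp : p.IsPath) :
    hG.parent r v = p.penultimate := by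
  rw [parent, ← hG.eq_path hp]

theorem parent_root (r : V) : hG.parent r r = r :=
  hG.parent_eq_penultimate (p := .nil) .nil

theorem adj_parent {r v : V} (hv : v ≠ r) : G.Adj (hG.parent r v) v :=
  (hG.path r v).adj_penultimate (Walk.not_nil_of_ne hv.symm)

theorem parent_getVert_succ {r b : V} {p : G.Walk r b} (hp : p.IsPath) {i : ℕ}
    (hi : i < p.length) : hG.parent r (p.getVert (i + 1)) = p.getVert i := by
  rw [hG.parent_eq_penultimate (hp.take (i + 1)), Walk.penultimate, Walk.take_length,
    Walk.take_getVert]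
  congr 1
  omega

theorem parent_eq_or_parent_eq_of_adj (r : V) {u v : V} (h : G.Adj u v) :
    hG.parent r u = v ∨ hG.parent r v = u := by
  by_cases hv : v ∈ (hG.path r u).support
  · exact .inl (hG.isAcyclic.eq_penultimate_of_adj_end (hG.isPath_path r u) h hv).symm
  · exact .inr <| by
      rw [hG.parent_eq_penultimate ((hG.isPath_path r u).concat hv h), Walk.penultimate_concat]

theorem adj_iff_parent (r : V) {u v : V} :
    G.Adj u v ↔ (u ≠ r ∧ hG.parent r u = v) ∨ (v ≠ r ∧ hG.parent r v = u) := by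
  refine ⟨fun h => ?_, ?_⟩
  · rcases hG.parent_eq_or_parent_eq_of_adj r h with hu | hv
    · refine .inl ⟨?_, hu⟩
      rintro rfl
      exact h.ne (hG.parent_root u ▸ hu)
    · refine .inr ⟨?_, hv⟩
      rintro rfl
      exact h.ne (hG.parent_root v ▸ hv).symm
  · rintro (⟨hu, rfl⟩ | ⟨hv, rfl⟩)
    · exact (hG.adj_parent hu).symm
    · exact hG.adj_parent hv

theorem ext_of_parent {G₁ G₂ : SimpleGraph V} (h₁ : G₁.IsTree) (h₂ : G₂.IsTree) (r : V)
    (h : h₁.parent r = h₂.parent r) : G₁ = G₂ := by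
  ext u v
  rw [h₁.adj_iff_parent r, h₂.adj_iff_parent r, h]

end IsTree

def Walk.IsPath.vertexEmbedding {G : SimpleGraph V} {u v : V} {p : G.Walk u v} (hp : p.IsPath)
    {m : ℕ} (hm : m ≤ p.length) : Fin (m + 1) ↪ V :=
  ⟨fun i => p.getVert i, fun i j h => Fin.ext (hp.getVert_injOn
    (by simp only [Set.mem_ofPred_eq]; omega) (by simp only [Set.mem_ofPred_eq]; omega) h)⟩

@[simp]
theorem Walk.IsPath.vertexEmbedding_apply {G : SimpleGraph V} {u v : V} {p : G.Walk u v}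
    (hp : p.IsPath) {m : ℕ} (hm : m ≤ p.length) (i : Fin (m + 1)) :
    hp.vertexEmbedding hm i = p.getVert i :=
  rfl

end SimpleGraph

open SimpleGraph

open Classical in
/-- The parent map of a tree rooted at `e 0` in which `e` lists a path, recovered from `e`
and from the parents `g` of the vertices off the path. -/
noncomputable def pathParentMap {V : Type*} {m : ℕ} (e : Fin (m + 1) ↪ V)
    (g : ↥(Set.range e)ᶜ → V) (v : V) : V :=
  if h : v ∈ Set.range e then e ⟨h.choose - 1, by have := h.choose.isLt; omega⟩ else g ⟨v, h⟩

theorem SimpleGraph.IsTree.pathParentMap_vertexEmbedding {V : Type*} {G : SimpleGraph V}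
    (hG : G.IsTree) {a b : V} {p : G.Walk a b} (hp : p.IsPath) {m : ℕ} (hm : m ≤ p.length) :
    pathParentMap (hp.vertexEmbedding hm) (fun v => hG.parent a v) = hG.parent a := by
  funext v
  unfold pathParentMap
  split_ifs with h
  · obtain ⟨i, rfl⟩ := id h
    simp only [(hp.vertexEmbedding hm).injective h.choose_spec]
    obtain ⟨_ | j, hj⟩ := i
    · simp [hG.parent_root]
    · exact (hG.parent_getVert_succ hp (i := j) (by omega)).symm
  · rfl

theorem card_sigma_embedding_compl_fun (V : Type*) [Fintype V] (k : ℕ) :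
    Nat.card (Σ e : Fin k ↪ V, (↥(Set.range e)ᶜ → V)) =
      (Fintype.card V).descFactorial k * Fintype.card V ^ (Fintype.card V - k) := by
  classical
  rw [Nat.card_eq_fintype_card, Fintype.card_sigma]
  simp only [Fintype.card_fun, Fintype.card_compl_set, Fintype.card_range, Fintype.card_fin,
    Finset.sum_const, Finset.card_univ, Fintype.card_embedding_eq, smul_eq_mul]

theorem ncard_isTree_hasLongPath_le {V : Type*} [Fintype V] (m : ℕ) :
    {T : SimpleGraph V | T.IsTree ∧ HasLongPath T m}.ncard ≤
      (Fintype.card V).descFactorial (m + 1) * Fintype.card V ^ (Fintype.card V - (m + 1)) := by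
  set S := {T : SimpleGraph V | T.IsTree ∧ HasLongPath T m}
  have hpath : ∀ T : S, ∃ (a b : V) (p : T.1.Walk a b) (hp : p.IsPath), m ≤ p.length :=
    fun T => let ⟨a, b, p, hp, hm⟩ := T.2.2; ⟨a, b, p, hp, by exact_mod_cast hm⟩
  choose a b p hp hm using hpath
  let code (T : S) : Σ e : Fin (m + 1) ↪ V, (↥(Set.range e)ᶜ → V) :=
    ⟨(hp T).vertexEmbedding (hm T), fun v => T.2.1.parent (a T) v⟩
  have hcode : code.Injective := by
    intro T₁ T₂ h
    have hroot : a T₁ = a T₂ := by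
      simpa [code] using congrArg (fun c => c.1 0) h
    have hparent := congrArg (fun c => pathParentMap c.1 c.2) h
    simp only [code, IsTree.pathParentMap_vertexEmbedding] at hparent
    exact Subtype.ext (IsTree.ext_of_parent T₁.2.1 T₂.2.1 (a T₁) (hroot ▸ hparent))
  calc S.ncard = Nat.card S := (Nat.card_coe_set_eq S).symm
    _ ≤ _ := Nat.card_le_card_of_injective code hcode
    _ = _ := card_sigma_embedding_compl_fun V (m + 1)

theorem hasLongPath_natCeil_iff {V : Type*} (G : SimpleGraph V) (ℓ : ℝ) :
    HasLongPath G ⌈ℓ⌉₊ ↔ HasLongPath G ℓ := by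
  simp only [HasLongPath, Nat.cast_le, Nat.ceil_le]

theorem pTree_natCeil (t : ℕ) (ℓ : ℝ) : pTree t ⌈ℓ⌉₊ = pTree t ℓ := by
  simp only [pTree, hasLongPath_natCeil_iff]

theorem pTree_nonneg (t : ℕ) (ℓ : ℝ) : 0 ≤ pTree t ℓ := by
  unfold pTree
  positivity

open Real

open Finset in
theorem Nat.descFactorial_succ_le_pow_mul_exp (n m : ℕ) :
    (n.descFactorial (m + 1) : ℝ) ≤ n ^ (m + 1) * exp (-((m : ℝ) ^ 2 / (2 * n))) := by
  rcases n.eq_zero_or_pos with rfl | hn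
  · simp
  have hn' : (0 : ℝ) < n := by exact_mod_cast hn
  have hfactor (i : ℕ) : ((n - i : ℕ) : ℝ) ≤ n * exp (-(i / n)) := by
    rcases le_or_gt i n with hi | hi
    · calc ((n - i : ℕ) : ℝ) = n * (1 - i / n) := by push_cast [hi]; field_simp
        _ ≤ n * exp (-(i / n)) := by gcongr; exact one_sub_le_exp_neg _
    · rw [Nat.sub_eq_zero_of_le hi.le, Nat.cast_zero]
      positivity
  have hgauss : (m : ℝ) ^ 2 / 2 ≤ ∑ i ∈ range (m + 1), (i : ℝ) := by
    have := Finset.sum_range_id_mul_two (m + 1)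
    rw [Nat.add_sub_cancel] at this
    have := congrArg (Nat.cast (R := ℝ)) this
    push_cast at this
    nlinarith
  calc (n.descFactorial (m + 1) : ℝ) = ∏ i ∈ range (m + 1), ((n - i : ℕ) : ℝ) := by
        rw [Nat.descFactorial_eq_prod_range, Nat.cast_prod]
    _ ≤ ∏ i ∈ range (m + 1), n * exp (-(i / n)) :=
        prod_le_prod (fun _ _ => Nat.cast_nonneg _) fun i _ => hfactor i
    _ = n ^ (m + 1) * exp (-((∑ i ∈ range (m + 1), (i : ℝ)) / n)) := by
        rw [prod_mul_distrib, prod_const, card_range, ← exp_sum, sum_div, sum_neg_distrib]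
    _ ≤ n ^ (m + 1) * exp (-((m : ℝ) ^ 2 / (2 * n))) := by
        rw [← div_div]
        gcongr

theorem pTree_le (t m : ℕ) : pTree t m ≤ t ^ 2 * exp (-((m : ℝ) ^ 2 / (2 * t))) := by
  have hcount := ncard_isTree_hasLongPath_le (V := Fin t) m
  rw [Fintype.card_fin] at hcount
  rcases lt_or_ge t (m + 1) with ht | ht
  · rw [Nat.descFactorial_eq_zero_iff_lt.2 ht, zero_mul, Nat.le_zero] at hcount
    rw [pTree, hcount, Nat.cast_zero, zero_div]
    positivity
  have ht' : (0 : ℝ) < t := by exact_mod_cast (by omega : 0 < t)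
  rw [pTree, div_le_iff₀ (by positivity)]
  calc _ ≤ (t.descFactorial (m + 1) : ℝ) * (t : ℝ) ^ (t - (m + 1)) := by exact_mod_cast hcount
    _ ≤ t ^ (m + 1) * exp (-((m : ℝ) ^ 2 / (2 * t))) * t ^ (t - (m + 1)) := by
        gcongr
        exact Nat.descFactorial_succ_le_pow_mul_exp t m
    _ = t ^ 2 * exp (-((m : ℝ) ^ 2 / (2 * t))) * t ^ (t - 2) := by
        have hpow : (t : ℝ) ^ (m + 1) * t ^ (t - (m + 1)) = t ^ 2 * t ^ (t - 2) := by
          obtain rfl | ht2 : t = 1 ∨ 2 ≤ t := by omega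
          · simp
          rw [← pow_add, ← pow_add]
          congr 1
          omega
        linear_combination exp (-((m : ℝ) ^ 2 / (2 * t))) * hpow

/-- `P(Borel(μ) = t)`, the probability that a Poisson(`μ`) Galton–Watson tree has `t` vertices. -/
noncomputable def borelWeight (μ : ℝ) (t : ℕ) : ℝ :=
  (t : ℝ) ^ (t - 1) * (μ * exp (-μ)) ^ t / (μ * t.factorial)

theorem borelWeight_nonneg {μ : ℝ} (hμ : 0 < μ) (t : ℕ) : 0 ≤ borelWeight μ t := by
  unfold borelWeight
  positivity

theorem borelWeight_mul_le {μ : ℝ} (hμ : 0 < μ) (t : ℕ) :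
    borelWeight μ t * t ≤ (exp 1 * (μ * exp (-μ))) ^ t / μ := by
  rcases t.eq_zero_or_pos with rfl | ht
  · simp [hμ.le]
  have hpow : (t : ℝ) ^ (t - 1) * t = t ^ t := by
    rw [← pow_succ, Nat.sub_add_cancel ht]
  have hfact : (t : ℝ) ^ t / t.factorial ≤ exp 1 ^ t := by
    rw [← exp_nat_mul, mul_one]
    exact pow_div_factorial_le_exp _ (Nat.cast_nonneg t) t
  calc borelWeight μ t * t = (t : ℝ) ^ t / t.factorial * (μ * exp (-μ)) ^ t / μ := by
        rw [borelWeight, ← hpow]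
        field_simp
    _ ≤ exp 1 ^ t * (μ * exp (-μ)) ^ t / μ := by gcongr
    _ = (exp 1 * (μ * exp (-μ))) ^ t / μ := by rw [← mul_pow]

theorem one_add_mul_exp_neg_le {ε : ℝ} (hε : 0 ≤ ε) (hε' : ε ≤ 1 / 2) :
    (1 + ε) * exp (-ε) ≤ exp (-(ε ^ 2 / 4)) := by
  have ha : 0 ≤ ε / 3 - ε ^ 2 / 12 := by nlinarith
  have hcube : 1 + ε ≤ (1 + (ε / 3 - ε ^ 2 / 12)) ^ 3 := by
    nlinarith [mul_nonneg (sq_nonneg ε) (by linarith : 0 ≤ 1 / 2 - ε), pow_nonneg ha 3,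
      pow_nonneg hε 4]
  have hexp : (1 + (ε / 3 - ε ^ 2 / 12)) ^ 3 ≤ exp (ε - ε ^ 2 / 4) := by
    calc (1 + (ε / 3 - ε ^ 2 / 12)) ^ 3 ≤ exp (ε / 3 - ε ^ 2 / 12) ^ 3 := by
          gcongr
          linarith [add_one_le_exp (ε / 3 - ε ^ 2 / 12)]
      _ = exp (ε - ε ^ 2 / 4) := by rw [← exp_nat_mul]; ring_nf
  calc (1 + ε) * exp (-ε) ≤ exp (ε - ε ^ 2 / 4) * exp (-ε) := by
        gcongr
        exact hcube.trans hexp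
    _ = exp (-(ε ^ 2 / 4)) := by rw [← exp_add]; ring_nf

theorem exp_neg_two_le_of_mul_exp_neg_eq {μ ε : ℝ} (hμ : 0 < μ) (hε : 0 ≤ ε) (hε' : ε ≤ 1)
    (h : μ * exp (-μ) = (1 + ε) * exp (-(1 + ε))) : exp (-2) ≤ μ :=
  calc exp (-2) ≤ exp (-(1 + ε)) := exp_le_exp.2 (by linarith)
    _ ≤ (1 + ε) * exp (-(1 + ε)) := le_mul_of_one_le_left (exp_pos _).le (by linarith)
    _ = μ * exp (-μ) := h.symm
    _ ≤ μ := mul_le_of_le_one_right hμ.le (exp_le_one_iff.2 (by linarith))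

theorem sq_mul_exp_neg_mul_le {c s : ℝ} (hc : 0 < c) (hs : 0 ≤ s) :
    s ^ 2 * exp (-(c * s)) ≤ 2 / c ^ 2 := by
  have h := pow_div_factorial_le_exp _ (mul_nonneg hc.le hs) 2
  rw [Nat.factorial_two, Nat.cast_ofNat, div_le_iff₀ two_pos] at h
  rw [le_div_iff₀ (by positivity), exp_neg, mul_assoc, mul_comm, mul_assoc,
    inv_mul_le_iff₀ (exp_pos _)]
  linarith

theorem exp_neg_mul_mul_exp_neg_div_le {ε m s : ℝ} (hs : 0 < s) :
    exp (-(ε ^ 2 / 8 * s)) * exp (-(m ^ 2 / (2 * s))) ≤ exp (-(ε * m / 2)) := by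
  rw [← exp_add, exp_le_exp]
  have : ε ^ 2 / 8 * s + m ^ 2 / (2 * s) - ε * m / 2 = (ε * s - 2 * m) ^ 2 / (8 * s) := by
    field_simp
    ring
  nlinarith [div_nonneg (sq_nonneg (ε * s - 2 * m)) (by positivity : (0 : ℝ) ≤ 8 * s)]

theorem exp_two_le_eight : exp 2 ≤ 8 := by
  have h := exp_one_lt_d9
  rw [show (2 : ℝ) = 1 + 1 by norm_num, exp_add]
  nlinarith [exp_pos 1]

theorem borelWeight_mul_pTree_le {ε μ : ℝ} (hε : 0 < ε) (hε' : ε ≤ 1 / 2) (hμ : 0 < μ)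
    (hfix : μ * exp (-μ) = (1 + ε) * exp (-(1 + ε))) (t m : ℕ) :
    borelWeight μ t * t * pTree t m ≤
      8 * (512 / ε ^ 4) * exp (-(ε * m / 2)) * exp (-(ε ^ 2 / 16)) ^ t := by
  rcases t.eq_zero_or_pos with rfl | ht
  · simp only [Nat.cast_zero, mul_zero, zero_mul]
    positivity
  have ht' : (0 : ℝ) < t := by exact_mod_cast ht
  have hweight : borelWeight μ t * t ≤ exp 2 * exp (-(ε ^ 2 / 4)) ^ t := by
    have hμinv : μ⁻¹ ≤ exp 2 := by
      rw [inv_le_comm₀ hμ (exp_pos 2), ← exp_neg]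
      exact exp_neg_two_le_of_mul_exp_neg_eq hμ hε.le (by linarith) hfix
    have hbase : exp 1 * (μ * exp (-μ)) = (1 + ε) * exp (-ε) := by
      rw [hfix, mul_left_comm, ← exp_add]
      ring_nf
    calc borelWeight μ t * t ≤ (exp 1 * (μ * exp (-μ))) ^ t / μ := borelWeight_mul_le hμ t
      _ = μ⁻¹ * ((1 + ε) * exp (-ε)) ^ t := by rw [hbase, div_eq_inv_mul]
      _ ≤ exp 2 * exp (-(ε ^ 2 / 4)) ^ t := by
          gcongr
          exact one_add_mul_exp_neg_le hε.le hε'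
  have hsplit : exp (-(ε ^ 2 / 4)) ^ t =
      exp (-(ε ^ 2 / 16 * t)) * exp (-(ε ^ 2 / 8 * t)) * exp (-(ε ^ 2 / 16)) ^ t := by
    rw [← exp_nat_mul, ← exp_nat_mul, ← exp_add, ← exp_add]
    ring_nf
  calc borelWeight μ t * t * pTree t m
      ≤ exp 2 * exp (-(ε ^ 2 / 4)) ^ t * (t ^ 2 * exp (-((m : ℝ) ^ 2 / (2 * t)))) :=
        mul_le_mul hweight (pTree_le t m) (pTree_nonneg t m) (by positivity)
    _ = exp 2 * ((t : ℝ) ^ 2 * exp (-(ε ^ 2 / 16 * t))) *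
          (exp (-(ε ^ 2 / 8 * t)) * exp (-((m : ℝ) ^ 2 / (2 * t)))) *
          exp (-(ε ^ 2 / 16)) ^ t := by
        rw [hsplit]
        ring
    _ ≤ 8 * (2 / (ε ^ 2 / 16) ^ 2) * exp (-(ε * m / 2)) * exp (-(ε ^ 2 / 16)) ^ t := by
        gcongr
        · exact exp_two_le_eight
        · exact sq_mul_exp_neg_mul_le (by positivity) ht'.le
        · exact exp_neg_mul_mul_exp_neg_div_le ht'
    _ = 8 * (512 / ε ^ 4) * exp (-(ε * m / 2)) * exp (-(ε ^ 2 / 16)) ^ t := by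
        field_simp
        ring

theorem inv_one_sub_exp_neg_le {b : ℝ} (hb : 0 < b) : (1 - exp (-b))⁻¹ ≤ 1 + b⁻¹ := by
  have h : exp (-b) ≤ (1 + b)⁻¹ := by
    rw [exp_neg]
    exact inv_anti₀ (by linarith) (by linarith [add_one_le_exp b])
  have h' : b / (1 + b) ≤ 1 - exp (-b) := by
    rw [show b / (1 + b) = 1 - (1 + b)⁻¹ by field_simp; ring]
    linarith
  calc (1 - exp (-b))⁻¹ ≤ (b / (1 + b))⁻¹ := inv_anti₀ (by positivity) h'
    _ = 1 + b⁻¹ := by field_simp; ring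

theorem exp_neg_le_pow {ε x : ℝ} (hε : 0 < ε) {k : ℕ} (h : k * log ε⁻¹ ≤ x) :
    exp (-x) ≤ ε ^ k := by
  rw [← exp_log (pow_pos hε k), log_pow, exp_le_exp]
  rw [log_inv] at h
  linarith

/-- **Lemma (expected size of Galton–Watson trees with long paths).** There exist
constants `C, ε₀ > 0` such that for every `ε ∈ (0, ε₀)`: if `μ ∈ (0,1)` satisfies
`μe^{−μ} = (1+ε)e^{−(1+ε)}` and `ℓ = (C/ε)·ln(1/ε)`, then
`∑_{t ≥ 1} (t^{t−1}(μe^{−μ})^t/(μ·t!)) · t · p_{t,ℓ/3} ≤ 14ε³`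
(the `t = 0` summand below vanishes thanks to the factor `t`). -/
theorem expected_size_of_GW_trees_with_long_paths :
    ∃ C > (0 : ℝ), ∃ ε₀ > (0 : ℝ), ∀ ε : ℝ, 0 < ε → ε < ε₀ →
      ∀ μ : ℝ, 0 < μ → μ < 1 →
        μ * Real.exp (-μ) = (1 + ε) * Real.exp (-(1 + ε)) →
        (∑' t : ℕ,
            ((t : ℝ) ^ (t - 1) * (μ * Real.exp (-μ)) ^ t / (μ * (t.factorial : ℝ))) *
              (t : ℝ) * pTree t (((C / ε) * Real.log (1 / ε)) / 3))
          ≤ 14 * ε ^ 3 := by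
  refine ⟨120, by norm_num, 1 / 10, by norm_num, fun ε hε hε₀ μ hμ _ hfix => ?_⟩
  set m := ⌈120 / ε * log (1 / ε) / 3⌉₊
  set r := exp (-(ε ^ 2 / 16))
  set K := 8 * (512 / ε ^ 4) * exp (-(ε * m / 2))
  have hr : r < 1 := exp_lt_one_iff.2 (by nlinarith)
  have hbound (t : ℕ) : borelWeight μ t * t * pTree t m ≤ K * r ^ t :=
    borelWeight_mul_pTree_le hε (by linarith) hμ hfix t m
  have hgeom : Summable fun t : ℕ => K * r ^ t :=
    (summable_geometric_of_lt_one (exp_pos _).le hr).mul_left K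
  have hsummable : Summable fun t : ℕ => borelWeight μ t * t * pTree t m :=
    hgeom.of_nonneg_of_le (fun t => mul_nonneg (mul_nonneg (borelWeight_nonneg hμ t)
      t.cast_nonneg) (pTree_nonneg t m)) hbound
  have hm : 20 * log ε⁻¹ ≤ ε * m / 2 := by
    have := Nat.le_ceil (120 / ε * log (1 / ε) / 3)
    rw [← one_div, show 20 * log (1 / ε) = ε * (120 / ε * log (1 / ε) / 3) / 2 by
      field_simp; ring]
    gcongr
  calc _ = ∑' t : ℕ, borelWeight μ t * t * pTree t m := by simp_rw [m, pTree_natCeil]; rfl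
    _ ≤ ∑' t : ℕ, K * r ^ t := hsummable.tsum_le_tsum hbound hgeom
    _ = K * (1 - r)⁻¹ := by rw [tsum_mul_left, tsum_geometric_of_lt_one (exp_pos _).le hr]
    _ ≤ 8 * (512 / ε ^ 4) * ε ^ 20 * (1 + (ε ^ 2 / 16)⁻¹) := by
        simp only [K]
        gcongr
        · exact exp_neg_le_pow hε hm
        · exact inv_one_sub_exp_neg_le (by positivity)
    _ ≤ 14 * ε ^ 3 := by
        have : ε ^ 10 ≤ (1 / 10) ^ 10 := by gcongr
        field_simp
        nlinarith [pow_pos hε 3, pow_pos hε 5]
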